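/- (Theorem 1, maximizers are decoupled for distinct coefficients) Let r₁ ≥ … ≥ r_N ≥ 0, V_in = diag(e^{−2r₁}, e^{2r₁}, …, e^{−2r_N}, e^{2r_N}), and let g₁, …, g_N be real with strictly ordered squares g₁² > g₂² > … > g_N², G = diag(g₁, g₁, …, g_N, g_N). If a real 2N×2N orthogonal symplectic matrix K achieves the optimal QFI, i.e., (Tr((K·V_in·Kᵀ·G)²) − Tr(G²))/2 = 2·∑_{a=1}^{N} g_a²·sinh²(2r_a), then V = K·V_in·Kᵀ is decoupled: all off-diagonal 2×2 blocks of V vanish. Moreover V is properly ordered: the a-th diagonal block of V has mean photon number sinh²(r_a), i.e., trace 2·cosh(2r_a). -/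

import Mathlib

open Matrix

noncomputable section

/-- The 2N×2N symplectic form: N diagonal copies of `J = [[0,1],[-1,0]]`.
Modes are indexed by `Fin N`, each contributing two coordinates indexed by `Fin 2`. -/
def Omega (N : ℕ) : Matrix (Fin N × Fin 2) (Fin N × Fin 2) ℝ :=
  Matrix.of fun p q => if p.1 = q.1 then !![(0 : ℝ), 1; -1, 0] p.2 q.2 else 0

/-- The covariance matrix `diag(e^{−2r₁}, e^{2r₁}, …, e^{−2r_N}, e^{2r_N})` of N independent
squeezed states with squeezing levels `r a`. -/
def VIn {N : ℕ} (r : Fin N → ℝ) : Matrix (Fin N × Fin 2) (Fin N × Fin 2) ℝ :=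
  Matrix.diagonal fun p => Real.exp ((if p.2 = 0 then (-2 : ℝ) else 2) * r p.1)

/-- The a-th diagonal 2×2 block of a 2N×2N matrix. -/
def dblock {N : ℕ} (V : Matrix (Fin N × Fin 2) (Fin N × Fin 2) ℝ) (a : Fin N) :
    Matrix (Fin 2) (Fin 2) ℝ :=
  Matrix.of fun i j => V (a, i) (a, j)

/-- The phase-shift generator `G = diag(g₁, g₁, …, g_N, g_N)`. -/
def Gmat {N : ℕ} (g : Fin N → ℝ) : Matrix (Fin N × Fin 2) (Fin N × Fin 2) ℝ :=
  Matrix.diagonal fun p => g p.1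

/-- The QFI functional `H(V, G) := (Tr((V·G)²) − Tr(G²))/2`. -/
def qfi {N : ℕ} (V G : Matrix (Fin N × Fin 2) (Fin N × Fin 2) ℝ) : ℝ :=
  (Matrix.trace ((V * G) ^ 2) - Matrix.trace (G ^ 2)) / 2


/-!
Write `V² = K·V_in(2r)·Kᵀ`. Because a passive `K` represents a unitary `U` on `ℂᴺ`, the trace of
the a-th diagonal block of `V²` is `∑_b |U_ab|² · 2cosh(4r_b)`, a doubly stochastic average of
the antitone vector `c_b = 2cosh(4r_b)`. Hence its partial sums are dominated by those of `c`,
and Abel summation against the strictly decreasing weights `g_a²` gives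
`∑_a g_a² tr(V²)_aa ≤ ∑_a g_a² c_a`, with equality only if `tr(V²)_aa = c_a` for every `a`.
On the other hand `Tr((VG)²) = ∑_{p,q} g_p g_q V_pq² ≤ ∑_a g_a² tr(V²)_aa` by AM–GM, and
optimality says `Tr((VG)²) = ∑_a g_a² c_a`. So both inequalities are equalities: AM–GM forces
`V_pq = 0` across distinct modes, and each diagonal block `X` of `V` is then symplectic
(`det X = 1`) with `tr X² = 2cosh(4r_a)`, so `(tr X)² = tr X² + 2 det X = (2cosh(2r_a))²`.
-/

open Finset

theorem sum_mul_le_sum_of_sum_eq_card {ι : Type*} [Fintype ι] (s : Finset ι) {x C : ι → ℝ}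
    (hx0 : ∀ i, 0 ≤ x i) (hx1 : ∀ i, x i ≤ 1) (hx : ∑ i, x i = #s)
    (hC : ∀ i ∈ s, ∀ j ∉ s, C j ≤ C i) :
    ∑ i, x i * C i ≤ ∑ i ∈ s, C i := by
  classical
  rcases s.eq_empty_or_nonempty with rfl | hs
  · have hx' : x = 0 := by
      simpa [Fintype.sum_eq_zero_iff_of_nonneg (Pi.le_def.mpr hx0)] using hx
    simp [hx']
  -- `θ` separates the values of `C` on `s` from those off `s`.
  set θ := s.inf' hs C
  have key : ∀ i, x i * C i ≤ x i * θ + if i ∈ s then C i - θ else 0 := by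
    intro i
    split_ifs with hi
    · nlinarith [inf'_le C hi, hx1 i]
    · nlinarith [le_inf' hs C fun j hj => hC j hj i hi, hx0 i]
  calc ∑ i, x i * C i ≤ ∑ i, (x i * θ + if i ∈ s then C i - θ else 0) :=
        sum_le_sum fun i _ => key i
    _ = ∑ i ∈ s, C i := by
        rw [sum_add_distrib, ← sum_mul, hx, sum_ite_mem, univ_inter, sum_sub_distrib, sum_const,
          nsmul_eq_mul]
        ring

theorem Fin.sum_mul_eq_sum_castSucc_add_last {n : ℕ} (w D : Fin (n + 1) → ℝ) :
    ∑ a, w a * D a = ∑ i : Fin n, (w i.castSucc - w (last n)) * D i.castSucc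
      + w (last n) * ∑ a, D a := by
  simp only [Fin.sum_univ_castSucc, sub_mul, sum_sub_distrib, mul_add, mul_sum]
  ring

theorem Fin.sum_Iic_last {n : ℕ} (D : Fin (n + 1) → ℝ) :
    ∑ a ∈ Iic (last n), D a = ∑ a, D a := by
  congr
  ext
  simp [Fin.le_last]

theorem sum_mul_nonpos_of_sum_Iic_nonpos {N : ℕ} {w D : Fin N → ℝ} (hw : Antitone w)
    (hw0 : ∀ a, 0 ≤ w a) (hD : ∀ m, ∑ a ∈ Iic m, D a ≤ 0) : ∑ a, w a * D a ≤ 0 := by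
  induction N with
  | zero => simp
  | succ n ih =>
    rw [Fin.sum_mul_eq_sum_castSucc_add_last]
    have hinit : ∑ i : Fin n, (w i.castSucc - w (Fin.last n)) * D i.castSucc ≤ 0 :=
      ih (fun i j hij => by simpa using hw (Fin.castSucc_le_castSucc_iff.mpr hij))
        (fun i => sub_nonneg.mpr (hw (Fin.le_last _)))
        (fun m => by simpa [Fin.sum_Iic_castSucc] using hD m.castSucc)
    have htotal : ∑ a, D a ≤ 0 := by simpa [Fin.sum_Iic_last] using hD (Fin.last n)
    nlinarith [hw0 (Fin.last n)]

theorem eq_zero_of_sum_Iic_nonpos_of_sum_mul_nonneg {N : ℕ} {w D : Fin N → ℝ}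
    (hw : StrictAnti w) (hw0 : ∀ a, 0 < w a) (hD : ∀ m, ∑ a ∈ Iic m, D a ≤ 0)
    (h : 0 ≤ ∑ a, w a * D a) : D = 0 := by
  induction N with
  | zero => exact Subsingleton.elim _ _
  | succ n ih =>
    rw [Fin.sum_mul_eq_sum_castSucc_add_last] at h
    have hw' : StrictAnti fun i : Fin n => w i.castSucc - w (Fin.last n) :=
      fun i j hij => by simpa using hw (Fin.castSucc_lt_castSucc_iff.mpr hij)
    have hD' : ∀ m : Fin n, ∑ i ∈ Iic m, D i.castSucc ≤ 0 :=
      fun m => by simpa [Fin.sum_Iic_castSucc] using hD m.castSucc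
    have hinit := sum_mul_nonpos_of_sum_Iic_nonpos hw'.antitone
      (fun i => sub_nonneg.mpr (hw.antitone (Fin.le_last _))) hD'
    have htotal : ∑ a, D a ≤ 0 := by simpa [Fin.sum_Iic_last] using hD (Fin.last n)
    have hlast := hw0 (Fin.last n)
    have hinit_zero : (fun i : Fin n => D i.castSucc) = 0 :=
      ih hw' (fun i => sub_pos.mpr (hw (Fin.castSucc_lt_last i))) hD' (by nlinarith)
    have htotal_zero : ∑ a, D a = 0 := le_antisymm htotal (by nlinarith)
    rw [Fin.sum_univ_castSucc] at htotal_zero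
    simp only [funext_iff, Pi.zero_apply] at hinit_zero
    ext a
    induction a using Fin.lastCases with
    | last => simpa [hinit_zero] using htotal_zero
    | cast i => exact hinit_zero i

theorem mulVec_eq_self_of_mem_doublyStochastic {N : ℕ} {P : Matrix (Fin N) (Fin N) ℝ}
    (hP : P ∈ doublyStochastic ℝ (Fin N)) {w c : Fin N → ℝ} (hw : StrictAnti w)
    (hc : Antitone c) (h : ∑ a, w a * c a ≤ ∑ a, w a * (P *ᵥ c) a) : P *ᵥ c = c := by
  have htotal : ∑ a, (P *ᵥ c - c) a = 0 := by
    simp [sum_sub_distrib, sum_mulVec_of_mem_colStochastic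
      (mem_doublyStochastic_iff_mem_rowStochastic_and_mem_colStochastic.mp hP).2]
  have hpartial : ∀ m, ∑ a ∈ Iic m, (P *ᵥ c - c) a ≤ 0 := by
    intro m
    have hle : ∑ b, (∑ a ∈ Iic m, P a b) * c b ≤ ∑ b ∈ Iic m, c b :=
      sum_mul_le_sum_of_sum_eq_card _ (fun b => sum_nonneg fun a _ => hP.1 a b)
        (fun b => (sum_le_sum_of_subset_of_nonneg (subset_univ _) fun a _ _ => hP.1 a b).trans
          (sum_col_of_mem_doublyStochastic hP b).le)
        (by rw [sum_comm]; simp [sum_row_of_mem_doublyStochastic hP])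
        (fun a ha b hb => hc (mem_Iic.mp ha |>.trans_lt (by simpa using hb)).le)
    simp only [sum_mul] at hle
    rw [sum_comm] at hle
    simpa [sum_sub_distrib, mulVec, dotProduct] using hle
  -- Positive shifted weights; the shift is invisible to `P c - c`, whose total is zero.
  obtain ⟨w₀, hw₀⟩ := Finite.bddBelow_range w
  have hshift : ∀ a, 0 < w a - w₀ + 1 := fun a => by linarith [hw₀ ⟨a, rfl⟩]
  refine sub_eq_zero.mp (eq_zero_of_sum_Iic_nonpos_of_sum_mul_nonneg
    (fun a b hab => by simpa using hw hab) hshift hpartial ?_)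
  have hsplit : ∑ a, (w a - w₀ + 1) * (P *ᵥ c - c) a
      = ∑ a, w a * (P *ᵥ c - c) a + (1 - w₀) * ∑ a, (P *ᵥ c - c) a := by
    rw [mul_sum, ← sum_add_distrib]
    exact sum_congr rfl fun a _ => by ring
  rw [hsplit, htotal, mul_zero, add_zero]
  simpa [mul_sub, sum_sub_distrib] using h

section Symmetric

variable {n : Type*} [Fintype n] [DecidableEq n] {V : Matrix n n ℝ}

theorem sum_sq_mul_diag_mul_self_sub_trace_sq (hV : Vᵀ = V) (d : n → ℝ) :
    ∑ p, d p ^ 2 * (V * V) p p - trace ((V * diagonal d) ^ 2)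
      = ∑ p, ∑ q, (d p - d q) ^ 2 * V p q ^ 2 / 2 := by
  have hsymm : ∀ p q, V q p = V p q := fun p q => by rw [← transpose_apply V p q, hV]
  have hswap : ∑ p, ∑ q, d q ^ 2 * V p q ^ 2 = ∑ p, ∑ q, d p ^ 2 * V p q ^ 2 := by
    rw [sum_comm]
    simp only [hsymm]
  have htrace : trace ((V * diagonal d) ^ 2) = ∑ p, ∑ q, d p * d q * V p q ^ 2 := by
    refine sum_congr rfl fun p _ => ?_
    rw [sq, diag_apply, mul_apply]
    simp only [mul_diagonal, hsymm]
    exact sum_congr rfl fun q _ => by ring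
  have hdiag : ∑ p, d p ^ 2 * (V * V) p p = ∑ p, ∑ q, d p ^ 2 * V p q ^ 2 := by
    simp only [mul_apply, mul_sum, hsymm, sq]
  have hsplit : ∀ p, ∑ q, (d p - d q) ^ 2 * V p q ^ 2 / 2 = ∑ q, d p ^ 2 * V p q ^ 2 / 2
      + ∑ q, d q ^ 2 * V p q ^ 2 / 2 - ∑ q, d p * d q * V p q ^ 2 := fun p => by
    rw [← sum_add_distrib, ← sum_sub_distrib]
    exact sum_congr rfl fun q _ => by ring
  simp only [hsplit, sum_sub_distrib, sum_add_distrib, ← sum_div, hswap, htrace, hdiag]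
  ring

theorem trace_sq_mul_diagonal_le (hV : Vᵀ = V) (d : n → ℝ) :
    trace ((V * diagonal d) ^ 2) ≤ ∑ p, d p ^ 2 * (V * V) p p := by
  have := sum_sq_mul_diag_mul_self_sub_trace_sq hV d
  have : 0 ≤ ∑ p, ∑ q, (d p - d q) ^ 2 * V p q ^ 2 / 2 := by positivity
  linarith

theorem apply_eq_zero_of_trace_sq_mul_diagonal_eq (hV : Vᵀ = V) {d : n → ℝ}
    (h : trace ((V * diagonal d) ^ 2) = ∑ p, d p ^ 2 * (V * V) p p) {p q : n}
    (hpq : d p ≠ d q) : V p q = 0 := by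
  have hzero := sum_sq_mul_diag_mul_self_sub_trace_sq hV d
  rw [h, sub_self, eq_comm, Fintype.sum_eq_zero_iff_of_nonneg (fun p => by positivity)] at hzero
  have hrow := congr_fun hzero p
  rw [Pi.zero_apply, Fintype.sum_eq_zero_iff_of_nonneg (fun q => by positivity)] at hrow
  have hpq' := congr_fun hrow q
  simp only [Pi.zero_apply, div_eq_zero_iff, mul_eq_zero, pow_eq_zero_iff, ne_eq,
    OfNat.ofNat_ne_zero, not_false_eq_true, sub_eq_zero, or_false] at hpq'
  tauto

end Symmetric

variable {N : ℕ}

theorem mul_Omega_apply (M : Matrix (Fin N × Fin 2) (Fin N × Fin 2) ℝ) (x y : Fin N × Fin 2) :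
    (M * Omega N) x y = if y.2 = 0 then -M x (y.1, 1) else M x (y.1, 0) := by
  obtain ⟨b, j⟩ := y
  rw [mul_apply, Fintype.sum_prod_type]
  simp only [Omega, of_apply, mul_ite, mul_zero]
  rw [sum_comm]
  simp only [sum_ite_eq', mem_univ, if_true]
  fin_cases j <;> simp [Fin.sum_univ_two]

theorem Omega_mul_apply (M : Matrix (Fin N × Fin 2) (Fin N × Fin 2) ℝ) (x y : Fin N × Fin 2) :
    (Omega N * M) x y = if x.2 = 0 then M (x.1, 1) y else -M (x.1, 0) y := by
  obtain ⟨a, i⟩ := x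
  rw [mul_apply, Fintype.sum_prod_type]
  simp only [Omega, of_apply, ite_mul, zero_mul]
  rw [sum_comm]
  simp only [sum_ite_eq, mem_univ, if_true]
  fin_cases i <;> simp [Fin.sum_univ_two]

theorem mul_Omega_comm_of_passive {K : Matrix (Fin N × Fin 2) (Fin N × Fin 2) ℝ}
    (hKorth : Kᵀ * K = 1) (hKsymp : K * Omega N * Kᵀ = Omega N) :
    K * Omega N = Omega N * K := by
  conv_lhs => rw [← Matrix.mul_one (K * Omega N), ← hKorth]
  rw [← Matrix.mul_assoc, hKsymp]

theorem apply_one_one_of_mul_Omega_comm {K : Matrix (Fin N × Fin 2) (Fin N × Fin 2) ℝ}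
    (hK : K * Omega N = Omega N * K) (a b : Fin N) : K (a, 1) (b, 1) = K (a, 0) (b, 0) := by
  simpa [mul_Omega_apply, Omega_mul_apply] using (congr_fun₂ hK (a, 0) (b, 1)).symm

theorem apply_one_zero_of_mul_Omega_comm {K : Matrix (Fin N × Fin 2) (Fin N × Fin 2) ℝ}
    (hK : K * Omega N = Omega N * K) (a b : Fin N) : K (a, 1) (b, 0) = -K (a, 0) (b, 1) := by
  simpa [mul_Omega_apply, Omega_mul_apply] using congr_fun₂ hK (a, 1) (b, 1)

/-- The entry `|U a b|²` of the unitary `U` on `ℂᴺ` represented by a passive `K`. -/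
def modeWeights (K : Matrix (Fin N × Fin 2) (Fin N × Fin 2) ℝ) : Matrix (Fin N) (Fin N) ℝ :=
  of fun a b => K (a, 0) (b, 0) ^ 2 + K (a, 0) (b, 1) ^ 2

theorem modeWeights_mem_doublyStochastic {K : Matrix (Fin N × Fin 2) (Fin N × Fin 2) ℝ}
    (hK : K * Omega N = Omega N * K) (hKorth : Kᵀ * K = 1) :
    modeWeights K ∈ doublyStochastic ℝ (Fin N) := by
  have hKKt : K * Kᵀ = 1 := mul_eq_one_comm.mp hKorth
  refine mem_doublyStochastic_iff_sum.mpr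
    ⟨fun a b => by simp only [modeWeights, of_apply]; positivity, fun a => ?_, fun b => ?_⟩
  · simpa [mul_apply, Fintype.sum_prod_type, Fin.sum_univ_two, modeWeights, sq, sum_add_distrib]
      using congr_fun₂ hKKt (a, 0) (a, 0)
  · have hcol := congr_fun₂ hKorth (b, 0) (b, 0)
    simp only [mul_apply, transpose_apply, Fintype.sum_prod_type, Fin.sum_univ_two,
      one_apply_eq] at hcol
    simp only [modeWeights, of_apply]
    rw [← hcol]
    refine sum_congr rfl fun a _ => ?_
    rw [apply_one_zero_of_mul_Omega_comm hK]
    ring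

theorem mul_diagonal_mul_transpose_apply {n : Type*} [Fintype n] [DecidableEq n]
    (K : Matrix n n ℝ) (d : n → ℝ) (p p' : n) :
    (K * diagonal d * Kᵀ) p p' = ∑ q, K p q * d q * K p' q := by
  rw [mul_apply]
  simp only [mul_diagonal, transpose_apply]

theorem trace_dblock_mul_diagonal_mul_transpose {K : Matrix (Fin N × Fin 2) (Fin N × Fin 2) ℝ}
    (hK : K * Omega N = Omega N * K) (d : Fin N × Fin 2 → ℝ) (a : Fin N) :
    (dblock (K * diagonal d * Kᵀ) a).trace
      = ∑ b, modeWeights K a b * (d (b, 0) + d (b, 1)) := by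
  simp only [trace_fin_two, dblock, of_apply, mul_diagonal_mul_transpose_apply,
    Fintype.sum_prod_type, Fin.sum_univ_two, ← sum_add_distrib]
  refine sum_congr rfl fun b _ => ?_
  rw [apply_one_one_of_mul_Omega_comm hK, apply_one_zero_of_mul_Omega_comm hK, modeWeights,
    of_apply]
  ring

theorem trace_dblock_conj_VIn {K : Matrix (Fin N × Fin 2) (Fin N × Fin 2) ℝ}
    (hK : K * Omega N = Omega N * K) (s : Fin N → ℝ) (a : Fin N) :
    (dblock (K * VIn s * Kᵀ) a).trace
      = (modeWeights K *ᵥ fun b => 2 * Real.cosh (2 * s b)) a := by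
  rw [VIn, trace_dblock_mul_diagonal_mul_transpose hK, mulVec, dotProduct]
  refine sum_congr rfl fun b _ => ?_
  simp only [Real.cosh_eq, Fin.isValue, if_true, one_ne_zero, if_false]
  ring_nf

theorem two_le_trace_dblock_conj_VIn {K : Matrix (Fin N × Fin 2) (Fin N × Fin 2) ℝ}
    (hK : K * Omega N = Omega N * K) (hKorth : Kᵀ * K = 1) (s : Fin N → ℝ) (a : Fin N) :
    2 ≤ (dblock (K * VIn s * Kᵀ) a).trace := by
  have hP := modeWeights_mem_doublyStochastic hK hKorth
  rw [trace_dblock_conj_VIn hK]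
  calc (2 : ℝ) = ∑ b, modeWeights K a b * 2 := by
        rw [← sum_mul, sum_row_of_mem_doublyStochastic hP, one_mul]
    _ ≤ _ := sum_le_sum fun b _ => mul_le_mul_of_nonneg_left
        (by linarith [Real.one_le_cosh (2 * s b)]) (hP.1 a b)

theorem VIn_transpose (s : Fin N → ℝ) : (VIn s)ᵀ = VIn s := diagonal_transpose _

theorem VIn_mul_VIn (s t : Fin N → ℝ) : VIn s * VIn t = VIn (s + t) := by
  simp only [VIn, diagonal_mul_diagonal, ← Real.exp_add, Pi.add_apply, mul_add]

theorem VIn_mul_Omega_mul_VIn (s : Fin N → ℝ) : VIn s * Omega N * VIn s = Omega N := by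
  ext ⟨a, i⟩ ⟨b, j⟩
  rw [VIn, mul_diagonal, diagonal_mul]
  by_cases hab : a = b
  · subst hab
    fin_cases i <;> fin_cases j <;> simp [Omega, ← Real.exp_add]
  · simp [Omega, hab]

theorem conj_VIn_mul_conj_VIn {K : Matrix (Fin N × Fin 2) (Fin N × Fin 2) ℝ}
    (hKorth : Kᵀ * K = 1) (s t : Fin N → ℝ) :
    K * VIn s * Kᵀ * (K * VIn t * Kᵀ) = K * VIn (s + t) * Kᵀ := by
  rw [← VIn_mul_VIn]
  simp only [Matrix.mul_assoc]
  rw [← Matrix.mul_assoc Kᵀ K, hKorth, Matrix.one_mul]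

theorem conj_VIn_symplectic {K : Matrix (Fin N × Fin 2) (Fin N × Fin 2) ℝ}
    (hKorth : Kᵀ * K = 1) (hK : K * Omega N = Omega N * K) (s : Fin N → ℝ) :
    K * VIn s * Kᵀ * Omega N * (K * VIn s * Kᵀ)ᵀ = Omega N := by
  have hKKt : K * Kᵀ = 1 := mul_eq_one_comm.mp hKorth
  simp only [transpose_mul, transpose_transpose, VIn_transpose]
  calc K * VIn s * Kᵀ * Omega N * (K * (VIn s * Kᵀ))
      = K * VIn s * (Kᵀ * (Omega N * K)) * VIn s * Kᵀ := by simp only [Matrix.mul_assoc]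
    _ = K * (VIn s * Omega N * VIn s) * Kᵀ := by
        rw [← hK, ← Matrix.mul_assoc Kᵀ, hKorth, Matrix.one_mul]
        simp only [Matrix.mul_assoc]
    _ = Omega N := by rw [VIn_mul_Omega_mul_VIn, hK, Matrix.mul_assoc, hKKt, Matrix.mul_one]

theorem trace_sq_mul_Gmat_of_qfi_eq {V : Matrix (Fin N × Fin 2) (Fin N × Fin 2) ℝ}
    {g r : Fin N → ℝ} (h : qfi V (Gmat g) = 2 * ∑ a, g a ^ 2 * Real.sinh (2 * r a) ^ 2) :
    trace ((V * Gmat g) ^ 2) = ∑ a, g a ^ 2 * (2 * Real.cosh (2 * (2 * r a))) := by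
  have htrace_G : trace (Gmat g ^ 2) = ∑ a, 2 * g a ^ 2 := by
    simp [Gmat, sq, trace_diagonal, Fintype.sum_prod_type]
  have hsum : ∑ a, g a ^ 2 * (2 * Real.cosh (2 * (2 * r a)))
      = ∑ a, 2 * g a ^ 2 + 2 * (2 * ∑ a, g a ^ 2 * Real.sinh (2 * r a) ^ 2) := by
    rw [mul_sum, mul_sum, ← sum_add_distrib]
    refine sum_congr rfl fun a _ => ?_
    rw [Real.cosh_two_mul, Real.cosh_sq]
    ring
  rw [qfi, htrace_G] at h
  linarith

theorem sum_sq_mul_diag_eq_sum_trace_dblock (g : Fin N → ℝ)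
    (W : Matrix (Fin N × Fin 2) (Fin N × Fin 2) ℝ) :
    ∑ p : Fin N × Fin 2, g p.1 ^ 2 * W p p = ∑ a, g a ^ 2 * (dblock W a).trace := by
  simp [Fintype.sum_prod_type, trace_fin_two, dblock, mul_add]

def IsDecoupled (V : Matrix (Fin N × Fin 2) (Fin N × Fin 2) ℝ) : Prop :=
  ∀ p q : Fin N × Fin 2, p.1 ≠ q.1 → V p q = 0

theorem isDecoupled_Omega : IsDecoupled (Omega N) := fun p q h => by simp [Omega, h]

theorem dblock_Omega (a : Fin N) : dblock (Omega N) a = !![0, 1; -1, 0] := by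
  ext i j
  simp [dblock, Omega]

theorem dblock_transpose (V : Matrix (Fin N × Fin 2) (Fin N × Fin 2) ℝ) (a : Fin N) :
    dblock Vᵀ a = (dblock V a)ᵀ := rfl

theorem dblock_mul_of_isDecoupled {V : Matrix (Fin N × Fin 2) (Fin N × Fin 2) ℝ}
    (hV : IsDecoupled V) (W : Matrix (Fin N × Fin 2) (Fin N × Fin 2) ℝ) (a : Fin N) :
    dblock (V * W) a = dblock V a * dblock W a := by
  ext i j
  simp only [dblock, of_apply, mul_apply, Fintype.sum_prod_type]
  rw [sum_eq_single a (fun b _ hb => sum_eq_zero fun k _ => by rw [hV _ _ (Ne.symm hb), zero_mul])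
    (fun h => absurd (mem_univ a) h)]

theorem det_eq_one_of_mul_J_mul_transpose {X : Matrix (Fin 2) (Fin 2) ℝ}
    (h : X * !![0, 1; -1, 0] * Xᵀ = !![0, 1; -1, 0]) : X.det = 1 := by
  have h01 := congr_fun₂ h 0 1
  simp only [mul_apply, of_apply, cons_val', cons_val_fin_one, Fin.sum_univ_two, cons_val_zero,
    cons_val_one, transpose_apply, mul_zero, mul_neg, mul_one, zero_add, neg_mul, add_zero] at h01
  rw [det_fin_two]
  linarith

theorem det_dblock_of_isDecoupled {V : Matrix (Fin N × Fin 2) (Fin N × Fin 2) ℝ}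
    (hV : IsDecoupled V) (hsymp : V * Omega N * Vᵀ = Omega N) (a : Fin N) :
    (dblock V a).det = 1 := by
  have hblock := congrArg (dblock · a) hsymp
  simp only [Matrix.mul_assoc, dblock_mul_of_isDecoupled hV,
    dblock_mul_of_isDecoupled isDecoupled_Omega, dblock_Omega, dblock_transpose] at hblock
  rw [← Matrix.mul_assoc] at hblock
  exact det_eq_one_of_mul_J_mul_transpose hblock

theorem trace_mul_self_fin_two (X : Matrix (Fin 2) (Fin 2) ℝ) :
    (X * X).trace = X.trace ^ 2 - 2 * X.det := by
  simp only [trace_fin_two, det_fin_two, mul_apply, Fin.sum_univ_two]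
  ring

theorem trace_eq_two_mul_cosh {X : Matrix (Fin 2) (Fin 2) ℝ} (hpos : 0 < X.trace)
    (hdet : X.det = 1) {s : ℝ} (h : (X * X).trace = 2 * Real.cosh (2 * s)) :
    X.trace = 2 * Real.cosh s := by
  have hsq : X.trace ^ 2 = (2 * Real.cosh s) ^ 2 := by
    rw [trace_mul_self_fin_two, hdet, Real.cosh_two_mul, Real.cosh_sq] at h
    rw [mul_pow, Real.cosh_sq]
    linarith
  exact (pow_left_inj₀ hpos.le (by positivity) two_ne_zero).mp hsq

/-- Theorem 1, maximizers are decoupled for distinct coefficients: with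
`r₁ ≥ … ≥ r_N ≥ 0` and strictly ordered squares `g₁² > … > g_N²`, if an orthogonal symplectic
`K` achieves the optimal QFI `2·∑_a g_a²·sinh²(2r_a)`, then `V = K·V_in·Kᵀ` is decoupled (all
off-diagonal 2×2 blocks vanish) and properly ordered: the a-th diagonal block has mean photon
number `sinh²(r_a)`, i.e. trace `2·cosh(2r_a)`. -/
theorem stmt_14 (N : ℕ) (r : Fin N → ℝ) (hr0 : ∀ a, 0 ≤ r a) (hr : Antitone r)
    (g : Fin N → ℝ) (hg : StrictAnti fun a => (g a) ^ 2)
    (K : Matrix (Fin N × Fin 2) (Fin N × Fin 2) ℝ)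
    (hKorth : Kᵀ * K = 1) (hKsymp : K * Omega N * Kᵀ = Omega N)
    (V : Matrix (Fin N × Fin 2) (Fin N × Fin 2) ℝ)
    (hVdef : V = K * VIn r * Kᵀ)
    (hopt : qfi V (Gmat g) = 2 * ∑ a : Fin N, (g a) ^ 2 * Real.sinh (2 * r a) ^ 2) :
    (∀ a b : Fin N, a ≠ b → ∀ i j : Fin 2, V (a, i) (b, j) = 0)
      ∧ ∀ a : Fin N, (dblock V a).trace = 2 * Real.cosh (2 * r a) := by
  have hK := mul_Omega_comm_of_passive hKorth hKsymp
  have hVt : Vᵀ = V := by simp [hVdef, transpose_mul, VIn_transpose, Matrix.mul_assoc]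
  set c : Fin N → ℝ := fun a => 2 * Real.cosh (2 * (2 * r a))
  have hc : Antitone c := fun a b hab => by
    have := hr hab
    have := hr0 b
    simp only [c]
    gcongr 2 * ?_
    rw [Real.cosh_le_cosh, abs_of_nonneg, abs_of_nonneg] <;> linarith
  have hqfi : trace ((V * Gmat g) ^ 2) = ∑ a, g a ^ 2 * c a := trace_sq_mul_Gmat_of_qfi_eq hopt
  have htrace : ∀ a, (dblock (V * V) a).trace = (modeWeights K *ᵥ c) a := fun a => by
    rw [hVdef, conj_VIn_mul_conj_VIn hKorth, trace_dblock_conj_VIn hK]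
    simp only [c, Pi.add_apply, two_mul]
  have hle : trace ((V * Gmat g) ^ 2) ≤ ∑ a, g a ^ 2 * (dblock (V * V) a).trace := by
    rw [← sum_sq_mul_diag_eq_sum_trace_dblock]
    exact trace_sq_mul_diagonal_le hVt _
  have hPc : modeWeights K *ᵥ c = c :=
    mulVec_eq_self_of_mem_doublyStochastic (modeWeights_mem_doublyStochastic hK hKorth) hg hc
      (by simpa only [htrace, hqfi] using hle)
  have hdec : IsDecoupled V := fun p q hpq =>
    apply_eq_zero_of_trace_sq_mul_diagonal_eq hVt (d := fun p => g p.1)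
      (by rw [sum_sq_mul_diag_eq_sum_trace_dblock]; simpa only [htrace, hPc, Gmat] using hqfi)
      (fun h => hpq (hg.injective (congrArg (· ^ 2) h)))
  refine ⟨fun a b hab i j => hdec (a, i) (b, j) hab, fun a => trace_eq_two_mul_cosh ?_ ?_ ?_⟩
  · exact two_pos.trans_le (hVdef ▸ two_le_trace_dblock_conj_VIn hK hKorth r a)
  · exact det_dblock_of_isDecoupled hdec (hVdef ▸ conj_VIn_symplectic hKorth hK r) a
  · rw [← dblock_mul_of_isDecoupled hdec, htrace, hPc]
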